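/- (Completeness, Kalmár) Every tautology is derivable in NPC from the empty hypothesis list: if g(A) = 1 for every Boolean valuation g, then ⊢ A. -/

import Mathlib

/-- Propositional formulas over a type `V` of atoms, built from atoms by
conjunction and negation. -/
inductive Formula (V : Type*) : Type _
  | atom : V → Formula V
  | conj : Formula V → Formula V → Formula V
  | neg  : Formula V → Formula V

/-- Natural propositional calculus (NPC) derivability `Γ ⊢ A`. -/
inductive NPC {V : Type*} : List (Formula V) → Formula V → Prop
  | ax (C : Formula V) : NPC [C] C
  | andElimLeft {Γ : List (Formula V)} {A B : Formula V} :
      NPC Γ (Formula.conj A B) → NPC Γ A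
  | andElimRight {Γ : List (Formula V)} {A B : Formula V} :
      NPC Γ (Formula.conj A B) → NPC Γ B
  | andIntro {Γ₁ Γ₂ : List (Formula V)} {A B : Formula V} :
      NPC Γ₁ A → NPC Γ₂ B → NPC (Γ₁ ++ Γ₂) (Formula.conj A B)
  | negElim {Γ : List (Formula V)} {C : Formula V} :
      NPC Γ (Formula.neg (Formula.neg C)) → NPC Γ C
  | negIntro {Γ₁ Γ₂ : List (Formula V)} {A C : Formula V} :
      NPC (Γ₁ ++ [C]) A → NPC (Γ₂ ++ [C]) (Formula.neg A) →
      NPC (Γ₁ ++ Γ₂) (Formula.neg C)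

/-- A Boolean valuation: a `{0,1}`-valued function on formulas respecting
negation and conjunction. -/
structure BooleanValuation (V : Type*) where
  g : Formula V → ℕ
  range01 : ∀ A, g A = 0 ∨ g A = 1
  neg_eq : ∀ A, g (Formula.neg A) = 1 - g A
  conj_eq : ∀ A B, g (Formula.conj A B) = g A * g B


/-!
Kalmár's argument. For an assignment `v` of truth values to the atoms, let `B^v` be `B` or
`¬B`, whichever is true under `v`. By induction on `B`, any conjunction containing the `p^v`
for the atoms `p` of `B` derives `B^v`; for a tautology `A` this is `A` itself. The
hypotheses `p^v` are then discharged one atom at a time, since `P ∧ p ⊢ A` and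
`P ∧ ¬p ⊢ A` give `P ⊢ A`; what remains is `¬(A ∧ ¬A)`, which is derivable outright.

Since ∧-introduction and ¬-introduction concatenate their contexts, everything is derived
from a single hypothesis, for which contraction `[P, P] ⊢ A ⟹ [P] ⊢ A` is admissible.
-/

namespace NPC

variable {V : Type*} {Γ Δ : List (Formula V)} {A B C P : Formula V}

theorem weaken_right (h : NPC Γ A) (C : Formula V) : NPC (Γ ++ [C]) A :=
  (andIntro h (ax C)).andElimLeft

theorem negNegIntro (h : NPC Γ A) : NPC Γ (.neg (.neg A)) := by
  simpa using negIntro (Γ₂ := []) (weaken_right h (.neg A)) (by simpa using ax (.neg A))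

theorem cut (h₁ : NPC Δ C) (h₂ : NPC [C] A) : NPC Δ A := by
  have hC : NPC ([] ++ [.neg A]) (.neg C) :=
    negIntro (Γ₁ := []) h₂ (weaken_right (ax (.neg A)) C)
  simpa using (negIntro (Γ₂ := []) (weaken_right h₁ (.neg A)) hC).negElim

theorem contract (h : NPC [P, P] A) : NPC [P] A := by
  have hnA : NPC ([.neg A] ++ [P]) (.neg P) :=
    negIntro (weaken_right (ax (.neg A)) P) (negNegIntro (Γ := [P] ++ [P]) h)
  have hnP : NPC ([.neg A] ++ []) (.neg P) :=
    negIntro (Γ₂ := []) hnA (negNegIntro (ax P))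
  exact (negIntro (Γ₁ := []) hnP (weaken_right (negNegIntro (ax P)) (.neg A))).negElim

theorem conjIntro_single (h₁ : NPC [P] B) (h₂ : NPC [P] C) : NPC [P] (.conj B C) :=
  contract (andIntro h₁ h₂)

theorem negIntro_single (h₁ : NPC [.conj P C] A) (h₂ : NPC [.conj P C] (.neg A)) :
    NPC [P] (.neg C) := by
  have hPC : NPC ([P] ++ [C]) (.conj P C) := andIntro (ax P) (ax C)
  exact contract (negIntro (hPC.cut h₁) (hPC.cut h₂))

theorem neg_contrapose (hB : NPC [P] (.neg B)) (h : NPC [C] B) : NPC [P] (.neg C) :=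
  negIntro_single ((ax _).andElimRight.cut h) ((ax _).andElimLeft.cut hB)

theorem by_cases_single (h₁ : NPC [.conj P C] A) (h₂ : NPC [.conj P (.neg C)] A) :
    NPC [P] A := by
  have hNeg : ∀ Q, NPC [.conj P Q] A → NPC [.conj P (.neg A)] (.neg Q) := fun Q hA =>
    negIntro_single
      ((conjIntro_single (ax _).andElimLeft.andElimLeft (ax _).andElimRight).cut hA)
      (ax _).andElimLeft.andElimRight
  exact (negIntro_single (hNeg _ h₁) (hNeg _ h₂)).negElim

theorem nonContradiction (A : Formula V) : NPC [] (.neg (.conj A (.neg A))) :=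
  negIntro (Γ₁ := []) (Γ₂ := []) (ax _).andElimLeft (ax _).andElimRight

end NPC

namespace Formula

variable {V : Type*}

def eval (v : V → Bool) : Formula V → Bool
  | atom p => v p
  | conj B C => B.eval v && C.eval v
  | neg B => !B.eval v

def atoms : Formula V → List V
  | atom p => [p]
  | conj B C => B.atoms ++ C.atoms
  | neg B => B.atoms

/-- Kalmár's `B^v`. -/
def polar (v : V → Bool) (B : Formula V) : Formula V :=
  if B.eval v then B else neg B

def conjPolarAtoms (v : V → Bool) (P : Formula V) : List V → Formula V
  | [] => P
  | p :: l => conj (conjPolarAtoms v P l) ((atom p).polar v)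

variable {v w : V → Bool} {P : Formula V} {l : List V}

theorem conjPolarAtoms_congr (h : ∀ q ∈ l, v q = w q) :
    conjPolarAtoms v P l = conjPolarAtoms w P l := by
  induction l with
  | nil => rfl
  | cons p l ih =>
    rw [conjPolarAtoms, conjPolarAtoms, ih fun q hq => h q (List.mem_cons_of_mem p hq), polar,
      polar, eval, eval, h p List.mem_cons_self]

theorem npc_polar_atom_of_mem {q : V} (hq : q ∈ l) :
    NPC [conjPolarAtoms v P l] ((atom q).polar v) := by
  induction l with
  | nil => simp at hq
  | cons p l ih =>
    rcases List.mem_cons.mp hq with rfl | hq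
    · exact (NPC.ax _).andElimRight
    · exact (NPC.ax _).andElimLeft.cut (ih hq)

/-- Kalmár's lemma. -/
theorem npc_polar (B : Formula V) (hB : ∀ q ∈ B.atoms, q ∈ l) :
    NPC [conjPolarAtoms v P l] (B.polar v) := by
  induction B with
  | atom q => exact npc_polar_atom_of_mem (hB q (by simp [atoms]))
  | conj B C ihB ihC =>
    have hB' := ihB fun q hq => hB q (by simp [atoms, hq])
    have hC' := ihC fun q hq => hB q (by simp [atoms, hq])
    cases hb : B.eval v <;> cases hc : C.eval v <;>
      simp only [polar, eval, hb, hc, Bool.and_false, Bool.and_true,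
        Bool.false_eq_true, if_false, if_true] at hB' hC' ⊢
    · exact NPC.neg_contrapose hB' (NPC.ax _).andElimLeft
    · exact NPC.neg_contrapose hB' (NPC.ax _).andElimLeft
    · exact NPC.neg_contrapose hC' (NPC.ax _).andElimRight
    · exact NPC.conjIntro_single hB' hC'
  | neg B ih =>
    have hB' := ih hB
    cases hb : B.eval v <;> simp only [polar, eval, hb, Bool.not_false, Bool.not_true,
      Bool.false_eq_true, if_false, if_true] at hB' ⊢
    · exact hB'
    · exact NPC.negNegIntro hB'

theorem npc_of_forall_conjPolarAtoms {A : Formula V} (hl : l.Nodup)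
    (h : ∀ v, NPC [conjPolarAtoms v P l] A) : NPC [P] A := by
  classical
  induction l with
  | nil => exact h fun _ => true
  | cons p l ih =>
    obtain ⟨hp, hl⟩ := List.nodup_cons.mp hl
    refine ih hl fun v => ?_
    -- `p ∉ l`, so updating `v` at `p` leaves the polarized tail unchanged.
    have hSplit : ∀ b,
        NPC [.conj (conjPolarAtoms v P l) ((atom p).polar (Function.update v p b))] A := by
      intro b
      have := h (Function.update v p b)
      rwa [conjPolarAtoms, conjPolarAtoms_congr fun q hq =>
        Function.update_of_ne (ne_of_mem_of_not_mem hq hp) _ _] at this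
    exact NPC.by_cases_single (C := atom p)
      (by simpa [polar, eval] using hSplit true) (by simpa [polar, eval] using hSplit false)

end Formula

def BooleanValuation.ofAssignment {V : Type*} (v : V → Bool) : BooleanValuation V where
  g B := (B.eval v).toNat
  range01 B := by cases B.eval v <;> simp
  neg_eq B := by cases h : B.eval v <;> simp [Formula.eval, h]
  conj_eq B C := by cases hB : B.eval v <;> cases hC : C.eval v <;> simp [Formula.eval, hB, hC]

theorem Formula.eval_eq_true_of_tautology {V : Type*} {A : Formula V}
    (h : ∀ g : BooleanValuation V, g.g A = 1) (v : V → Bool) : A.eval v = true := by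
  simpa [BooleanValuation.ofAssignment] using h (.ofAssignment v)

/-- Th. 2 (completeness, Kalmár): every tautology is derivable in NPC from the
empty hypothesis list. -/
theorem kalmar_completeness {V : Type*} (A : Formula V)
    (h : ∀ g : BooleanValuation V, g.g A = 1) :
    NPC ([] : List (Formula V)) A := by
  classical
  let T : Formula V := .neg (.conj A (.neg A))
  have hPolar : ∀ v, NPC [Formula.conjPolarAtoms v T A.atoms.dedup] A := fun v => by
    simpa [Formula.polar, Formula.eval_eq_true_of_tautology h v] using
      Formula.npc_polar (v := v) A fun q hq => List.mem_dedup.mpr hq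
  exact (NPC.nonContradiction A).cut
    (Formula.npc_of_forall_conjPolarAtoms A.atoms.nodup_dedup hPolar)
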